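/- The function g(a) = (1/√(2π)) · (1/(a·Φ⁻¹(a))) · e^{-(Φ⁻¹(a))²/2} + 1 is strictly decreasing on the interval (1/2, 1), where Φ is the standard normal CDF. -/

import Mathlib

open MeasureTheory ProbabilityTheory Real Set

/-- Standard normal CDF Φ. -/
noncomputable def stdNormalCDF (t : ℝ) : ℝ := (gaussianReal 0 1 (Iic t)).toReal

/-- Inverse of the standard normal CDF, Φ⁻¹. -/
noncomputable def stdNormalCDFInv : ℝ → ℝ := Function.invFun stdNormalCDF

/-- The theoretical robustness-accuracy tradeoff curve. -/
noncomputable def tradeoffCurve (a : ℝ) : ℝ :=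
  (Real.sqrt (2 * π))⁻¹ * (1 / (a * stdNormalCDFInv a)) *
    Real.exp (-(stdNormalCDFInv a) ^ 2 / 2) + 1

/-!
`Φ` is the cdf of the standard Gaussian, a probability measure without atoms whose density is
everywhere positive; hence `Φ` is continuous and strictly increasing, maps onto `(0, 1)`, and
`Φ 0 = 1 / 2` by the symmetry `x ↦ -x`. So `q = Φ⁻¹` is positive and strictly increasing on
`(1 / 2, 1)`, and `g a - 1` is a positive constant times the product of the two positive, strictly
decreasing factors `1 / (a * q a)` and `exp (-(q a) ^ 2 / 2)`.
-/

open Filter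

namespace ProbabilityTheory

variable {μ : Measure ℝ} [IsProbabilityMeasure μ]

lemma continuous_cdf [NullSingletonClass μ] : Continuous (cdf μ) := by
  refine continuous_iff_continuousAt.2 fun x => ?_
  rw [(monotone_cdf μ).continuousAt_iff_leftLim_eq_rightLim, StieltjesFunction.rightLim_eq]
  have h := (cdf μ).measure_singleton x
  rw [measure_cdf, measure_singleton, eq_comm, ENNReal.ofReal_eq_zero] at h
  exact le_antisymm ((monotone_cdf μ).leftLim_le le_rfl) (by linarith)

lemma strictMono_cdf (h : volume ≪ μ) : StrictMono (cdf μ) := by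
  intro s t hst
  have hpos : μ (Ioc s t) ≠ 0 := fun h0 => hst.not_ge (by simpa using h h0)
  rwa [← measure_cdf μ, StieltjesFunction.measure_Ioc, ne_eq, ENNReal.ofReal_eq_zero, not_le,
    sub_pos] at hpos

lemma Ioo_subset_range_cdf [NullSingletonClass μ] : Ioo 0 1 ⊆ range (cdf μ) := fun _ ha =>
  mem_range_of_exists_le_of_exists_ge continuous_cdf
    ((tendsto_cdf_atBot μ).eventually (eventually_le_nhds ha.1)).exists
    ((tendsto_cdf_atTop μ).eventually (eventually_ge_nhds ha.2)).exists

lemma cdf_zero_of_map_neg [NullSingletonClass μ] (h : μ.map (fun x => -x) = μ) :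
    cdf μ 0 = 1 / 2 := by
  have hsymm : μ.real (Iic 0) = μ.real (Ioi 0) :=
    calc μ.real (Iic 0) = (μ.map fun x => -x).real (Iic 0) := by rw [h]
      _ = μ.real (Ici 0) := by simp [map_measureReal_apply measurable_neg measurableSet_Iic]
      _ = μ.real (Ioi 0) := measureReal_congr Ioi_ae_eq_Ici.symm
  have htotal : μ.real (Iic 0) + μ.real (Ioi 0) = 1 := by
    rw [← compl_Iic, probReal_compl_eq_one_sub measurableSet_Iic]; ring
  rw [cdf_eq_real]
  linarith

end ProbabilityTheory

instance : NullSingletonClass (gaussianReal 0 1) := nullSingletonClass_gaussianReal one_ne_zero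

lemma stdNormalCDF_eq_cdf : stdNormalCDF = cdf (gaussianReal 0 1) := by
  ext t
  rw [cdf_eq_real, measureReal_def, stdNormalCDF]

lemma stdNormalCDF_strictMono : StrictMono stdNormalCDF :=
  stdNormalCDF_eq_cdf ▸ strictMono_cdf (gaussianReal_absolutelyContinuous' 0 one_ne_zero)

lemma stdNormalCDF_zero : stdNormalCDF 0 = 1 / 2 := by
  rw [stdNormalCDF_eq_cdf, cdf_zero_of_map_neg]
  simpa using gaussianReal_map_neg (μ := 0) (v := 1)

lemma stdNormalCDF_stdNormalCDFInv {a : ℝ} (ha : a ∈ Ioo 0 1) :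
    stdNormalCDF (stdNormalCDFInv a) = a :=
  Function.invFun_eq (stdNormalCDF_eq_cdf ▸ Ioo_subset_range_cdf ha)

lemma stdNormalCDFInv_strictMonoOn : StrictMonoOn stdNormalCDFInv (Ioo 0 1) := fun a ha b hb hab =>
  stdNormalCDF_strictMono.lt_iff_lt.1 <| by
    rwa [stdNormalCDF_stdNormalCDFInv ha, stdNormalCDF_stdNormalCDFInv hb]

lemma stdNormalCDFInv_pos {a : ℝ} (ha : a ∈ Ioo (1 / 2) 1) : 0 < stdNormalCDFInv a :=
  stdNormalCDF_strictMono.lt_iff_lt.1 <| by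
    rw [stdNormalCDF_zero, stdNormalCDF_stdNormalCDFInv ⟨by linarith [ha.1], ha.2⟩]
    exact ha.1

/-- the tradeoff curve `g` is strictly decreasing on `(1/2, 1)`. -/
theorem stmt8 : StrictAntiOn tradeoffCurve (Ioo (1 / 2 : ℝ) 1) := by
  intro a ha b hb hab
  have hsub : Ioo (1 / 2 : ℝ) 1 ⊆ Ioo 0 1 := Ioo_subset_Ioo_left (by norm_num)
  have hq := stdNormalCDFInv_strictMonoOn (hsub ha) (hsub hb) hab
  have hqa := stdNormalCDFInv_pos ha
  have hqb := stdNormalCDFInv_pos hb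
  have ha0 : 0 < a := (hsub ha).1
  have hb0 : 0 < b := (hsub hb).1
  unfold tradeoffCurve
  gcongr
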